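/- For every real number q with q > 1: if P' is a 4×4 real upper triangular matrix with all diagonal entries equal to 1 and Λ' is a 4×4 real diagonal matrix such that P'ᵀ Λ' P' = Ω, where Ω = [[1, 1−q², q⁴−1, 1], [1−q², q⁸−q⁶+q⁴−q², −q⁸+q⁴, q⁸−q⁶], [q⁴−1, −q⁸+q⁴, q¹⁰+q⁸−q⁶−q⁴, −q¹⁰+q⁶], [1, q⁸−q⁶, −q¹⁰+q⁶, q¹²]], then P' = [[1, 1−q², q⁴−1, 1], [0, 1, −1, 1], [0, 0, 1, −1], [0, 0, 0, 1]] and Λ' = diag(1, p₁(q), q²·p₁(q), q⁴·p₁(q)) with p₁(q) = (q⁴−1)(q⁴−q²+1). -/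

import Mathlib

/-!
If `Pᵀ D P = Qᵀ E Q` with `P, Q` upper unitriangular and `D, E` diagonal, then
`D (P Q⁻¹) = (Q P⁻¹)ᵀ E` is at once upper and lower triangular. Its diagonal gives `D = E`, and
its vanishing entries force `Q P⁻¹ = 1` as soon as the pivots of `E` are nonzero. The pair in
the conclusion solves the equation for `Ω`, and its pivots `1, p₁, q²p₁, q⁴p₁` are positive
for `q > 1`.
-/

open Matrix

namespace Matrix

variable {n R : Type*} [LinearOrder n] [Fintype n] [CommRing R]

theorem IsUpperTriangular.mul_apply_self {A B : Matrix n n R} (hA : A.IsUpperTriangular)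
    (hB : B.IsUpperTriangular) (i : n) : (A * B) i i = A i i * B i i := by
  rw [mul_apply, Finset.sum_eq_single i]
  · intro k _ hki
    rcases hki.lt_or_gt with hlt | hgt
    · rw [hA hlt, zero_mul]
    · rw [hB hgt, mul_zero]
  · simp

def IsUpperUnitriangular (M : Matrix n n R) : Prop :=
  M.IsUpperTriangular ∧ ∀ i, M i i = 1

namespace IsUpperUnitriangular

variable {P Q : Matrix n n R}

theorem mul (hP : P.IsUpperUnitriangular) (hQ : Q.IsUpperUnitriangular) :
    (P * Q).IsUpperUnitriangular :=
  ⟨hP.1.mul hQ.1, fun i => by rw [hP.1.mul_apply_self hQ.1, hP.2, hQ.2, one_mul]⟩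

variable [DecidableEq n]

theorem isUnit_det (hP : P.IsUpperUnitriangular) : IsUnit P.det := by
  simp [det_of_isUpperTriangular hP.1, hP.2]

theorem inv (hP : P.IsUpperUnitriangular) : P⁻¹.IsUpperUnitriangular := by
  have := invertibleOfIsUnitDet P hP.isUnit_det
  refine ⟨blockTriangular_inv_of_blockTriangular hP.1, fun i => ?_⟩
  have hii := congrFun (congrFun (mul_nonsing_inv P hP.isUnit_det) i) i
  rwa [hP.1.mul_apply_self (blockTriangular_inv_of_blockTriangular hP.1), hP.2, one_mul,
    one_apply_eq] at hii

theorem eq_one_of_diagonal_mul_eq_transpose_mul_diagonal [NoZeroDivisors R] {d e : n → R}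
    (hP : P.IsUpperUnitriangular) (hQ : Q.IsUpperUnitriangular) (he : ∀ i, e i ≠ 0)
    (h : diagonal d * P = Qᵀ * diagonal e) : Q = 1 ∧ d = e := by
  have hij (i j : n) : d i * P i j = Q j i * e j := by
    simpa using congrFun (congrFun h i) j
  refine ⟨?_, funext fun i => by simpa [hP.2, hQ.2] using hij i i⟩
  ext i j
  rcases lt_trichotomy i j with hlt | rfl | hgt
  · have hji := hij j i
    rw [hP.1 hlt, mul_zero, eq_comm, mul_eq_zero] at hji
    simp [hji.resolve_right (he i), hlt.ne]
  · simp [hQ.2]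
  · simp [hQ.1 hgt, hgt.ne']

theorem eq_of_transpose_mul_diagonal_mul_eq [NoZeroDivisors R] {d e : n → R}
    (hP : P.IsUpperUnitriangular) (hQ : Q.IsUpperUnitriangular) (he : ∀ i, e i ≠ 0)
    (h : Pᵀ * diagonal d * P = Qᵀ * diagonal e * Q) : P = Q ∧ d = e := by
  have key : diagonal d * (P * Q⁻¹) = (Q * P⁻¹)ᵀ * diagonal e :=
    calc diagonal d * (P * Q⁻¹) = P⁻¹ᵀ * (Pᵀ * diagonal d * P) * Q⁻¹ := by
          simp only [← Matrix.mul_assoc, ← transpose_mul, mul_nonsing_inv P hP.isUnit_det,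
            transpose_one, Matrix.one_mul]
      _ = P⁻¹ᵀ * (Qᵀ * diagonal e * Q) * Q⁻¹ := by rw [h]
      _ = (Q * P⁻¹)ᵀ * diagonal e := by
          simp only [transpose_mul, Matrix.mul_assoc, mul_nonsing_inv Q hQ.isUnit_det,
            Matrix.mul_one]
  obtain ⟨hQP, hde⟩ := (hP.mul hQ.inv).eq_one_of_diagonal_mul_eq_transpose_mul_diagonal
    (hQ.mul hP.inv) he key
  refine ⟨?_, hde⟩
  calc P = Q * P⁻¹ * P := by rw [hQP, Matrix.one_mul]
    _ = Q := by rw [Matrix.mul_assoc, nonsing_inv_mul P hP.isUnit_det, Matrix.mul_one]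

end IsUpperUnitriangular
end Matrix

def reeUnipotent (q : ℝ) : Matrix (Fin 4) (Fin 4) ℝ :=
  !![1, 1 - q ^ 2, q ^ 4 - 1, 1;
     0, 1, -1, 1;
     0, 0, 1, -1;
     0, 0, 0, 1]

def reePivots (q : ℝ) : Fin 4 → ℝ :=
  ![1, (q ^ 4 - 1) * (q ^ 4 - q ^ 2 + 1),
    q ^ 2 * ((q ^ 4 - 1) * (q ^ 4 - q ^ 2 + 1)),
    q ^ 4 * ((q ^ 4 - 1) * (q ^ 4 - q ^ 2 + 1))]

def reeOmega (q : ℝ) : Matrix (Fin 4) (Fin 4) ℝ :=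
  !![1, 1 - q ^ 2, q ^ 4 - 1, 1;
     1 - q ^ 2, q ^ 8 - q ^ 6 + q ^ 4 - q ^ 2, -q ^ 8 + q ^ 4, q ^ 8 - q ^ 6;
     q ^ 4 - 1, -q ^ 8 + q ^ 4, q ^ 10 + q ^ 8 - q ^ 6 - q ^ 4, -q ^ 10 + q ^ 6;
     1, q ^ 8 - q ^ 6, -q ^ 10 + q ^ 6, q ^ 12]

theorem reeUnipotent_isUpperUnitriangular (q : ℝ) : (reeUnipotent q).IsUpperUnitriangular :=
  ⟨fun i j hij => by fin_cases i <;> fin_cases j <;> first | rfl | exact absurd hij (by decide),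
    fun i => by fin_cases i <;> rfl⟩

theorem reePivots_pos {q : ℝ} (hq : 1 < q) (i : Fin 4) : 0 < reePivots q i := by
  have hq0 : 0 < q := by linarith
  have hp : 0 < (q ^ 4 - 1) * (q ^ 4 - q ^ 2 + 1) := by
    have hq2 : 1 < q ^ 2 := one_lt_pow₀ hq two_ne_zero
    have hq4 : 1 < q ^ 4 := one_lt_pow₀ hq (by norm_num)
    exact mul_pos (by linarith) (by nlinarith)
  fin_cases i <;> simp [reePivots, hp, hq0]

theorem transpose_reeUnipotent_mul_diagonal_reePivots_mul (q : ℝ) :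
    (reeUnipotent q)ᵀ * diagonal (reePivots q) * reeUnipotent q = reeOmega q := by
  ext i j
  fin_cases i <;> fin_cases j <;>
    simp only [reeUnipotent, reePivots, reeOmega, mul_apply, Fin.sum_univ_four, transpose_apply,
      diagonal_apply, of_apply, cons_val, Fin.reduceFinMk, Fin.reduceEq, Fin.isValue, if_true,
      if_false] <;> ring

/-- Uniqueness in Lusztig's algorithm for the Ree groups `²G₂(q²)`:
for `q > 1`, if `P'` is unipotent upper triangular and `Λ'` is diagonal with
`P'ᵀ Λ' P' = Ω`, then `P'` and `Λ'` are the matrices of Statement 15. -/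
theorem ree_g2_lusztig_matrix_uniqueness (q : ℝ) (hq : 1 < q)
    (P' Λ' : Matrix (Fin 4) (Fin 4) ℝ)
    (hP'upper : ∀ i j : Fin 4, j < i → P' i j = 0)
    (hP'diag : ∀ i : Fin 4, P' i i = 1)
    (hΛ'diag : ∀ i j : Fin 4, i ≠ j → Λ' i j = 0)
    (h : P'ᵀ * Λ' * P' =
      !![1, 1 - q ^ 2, q ^ 4 - 1, 1;
         1 - q ^ 2, q ^ 8 - q ^ 6 + q ^ 4 - q ^ 2, -q ^ 8 + q ^ 4, q ^ 8 - q ^ 6;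
         q ^ 4 - 1, -q ^ 8 + q ^ 4, q ^ 10 + q ^ 8 - q ^ 6 - q ^ 4, -q ^ 10 + q ^ 6;
         1, q ^ 8 - q ^ 6, -q ^ 10 + q ^ 6, q ^ 12]) :
    P' = !![1, 1 - q ^ 2, q ^ 4 - 1, 1;
            0, 1, -1, 1;
            0, 0, 1, -1;
            0, 0, 0, 1] ∧
    Λ' = Matrix.diagonal
        ![1, (q ^ 4 - 1) * (q ^ 4 - q ^ 2 + 1),
          q ^ 2 * ((q ^ 4 - 1) * (q ^ 4 - q ^ 2 + 1)),
          q ^ 4 * ((q ^ 4 - 1) * (q ^ 4 - q ^ 2 + 1))] := by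
  have hP' : P'.IsUpperUnitriangular := ⟨fun i j hij => hP'upper i j hij, hP'diag⟩
  have hΛ' : diagonal Λ'.diag = Λ' := IsDiag.diagonal_diag fun i j hij => hΛ'diag i j hij
  rw [← hΛ'] at h ⊢
  obtain ⟨hP, hd⟩ := hP'.eq_of_transpose_mul_diagonal_mul_eq
    (reeUnipotent_isUpperUnitriangular q) (fun i => (reePivots_pos hq i).ne')
    (h.trans (transpose_reeUnipotent_mul_diagonal_reePivots_mul q).symm)
  exact ⟨hP, congrArg diagonal hd⟩
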